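/- arXiv:1701.01047 — 10 statements merged into one kernel-verified Lean document; each statement's English description precedes it below -/
import Mathlib

section
/- Let n ≥ 0 be an integer and let f be a polynomial with complex coefficients of degree at most n. Then for all complex numbers x and y with y ∉ {0, -1, -2, ..., -n}, one has ∑_{k=0}^{n} C(n,k) (-1)^k f(x-k)/(y+k) = n! · f(x+y) / (y(y+1)⋯(y+n)). -/
open Finset Nat

lemma melzak_prod_erase (n m : ℕ) (hm : m ≤ n) :
    ∏ j ∈ (Finset.range (n+1)).erase m, ((j:ℂ) - m) = (-1)^m * m ! * (n-m)! := by
  have hset : (Finset.range (n+1)).erase m = Finset.range m ∪ Finset.Ico (m+1) (n+1) := by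
    ext j
    simp only [Finset.mem_erase, Finset.mem_range, Finset.mem_union, Finset.mem_Ico]
    omega
  have hdisj : Disjoint (Finset.range m) (Finset.Ico (m+1) (n+1)) := by
    rw [Finset.disjoint_left]
    intro a ha hb
    simp only [Finset.mem_range] at ha
    simp only [Finset.mem_Ico] at hb
    omega
  rw [hset, Finset.prod_union hdisj]
  have h1 : ∏ j ∈ Finset.range m, ((j:ℂ) - m) = (-1)^m * m ! := by
    have hcong : ∀ j ∈ Finset.range m, ((j:ℂ) - m) = -(((m - j : ℕ)):ℂ) := by
      intro j hj
      simp only [Finset.mem_range] at hj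
      push_cast [Nat.cast_sub hj.le]
      ring
    have hcong2 : ∀ j ∈ Finset.range m, -(((m - j : ℕ)):ℂ) = (-1) * ((m - j : ℕ):ℂ) := by
      intro j _; ring
    rw [Finset.prod_congr rfl hcong, Finset.prod_congr rfl hcong2,
      Finset.prod_mul_distrib, Finset.prod_const, Finset.card_range, ← Nat.cast_prod]
    congr 1
    have hrefl := Finset.prod_range_reflect (fun j => j + 1) m
    have hnat : ∏ i ∈ Finset.range m, (m - i) = m ! := by
      rw [← Finset.prod_range_add_one_eq_factorial, ← hrefl]
      apply Finset.prod_congr rfl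
      intro j hj
      simp only [Finset.mem_range] at hj
      omega
    rw [hnat]
  have h2 : ∏ j ∈ Finset.Ico (m+1) (n+1), ((j:ℂ) - m) = ((n-m)! : ℂ) := by
    rw [Finset.prod_Ico_eq_prod_range]
    have hnm : n + 1 - (m + 1) = n - m := by omega
    rw [hnm]
    have hcong : ∀ i ∈ Finset.range (n - m), ((m + 1 + i : ℕ):ℂ) - m = ((i + 1 : ℕ):ℂ) := by
      intro i _
      push_cast
      ring
    rw [Finset.prod_congr rfl hcong, ← Nat.cast_prod, Finset.prod_range_add_one_eq_factorial]
  rw [h1, h2]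

theorem melzak_formula (n : ℕ) (f : Polynomial ℂ) (hf : f.natDegree ≤ n)
    (x y : ℂ) (hy : ∀ k ∈ Finset.range (n + 1), y + k ≠ 0) :
    ∑ k ∈ Finset.range (n + 1), (n.choose k : ℂ) * (-1) ^ k * f.eval (x - k) / (y + k) =
      (n ! : ℂ) * f.eval (x + y) / ∏ j ∈ Finset.range (n + 1), (y + j) := by
  set c : ℕ → ℂ := fun k => (n.choose k : ℂ) * (-1) ^ k * f.eval (x - k) with hc
  set P : Polynomial ℂ := ∑ k ∈ Finset.range (n+1), Polynomial.C (c k) *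
      ∏ j ∈ (Finset.range (n+1)).erase k, (Polynomial.X + Polynomial.C (j:ℂ)) with hP
  set Q : Polynomial ℂ := Polynomial.C (n ! : ℂ) * f.comp (Polynomial.C x + Polynomial.X) with hQ
  have hPeval : ∀ z : ℂ, P.eval z = ∑ k ∈ Finset.range (n+1), c k *
      ∏ j ∈ (Finset.range (n+1)).erase k, (z + j) := by
    intro z
    simp [hP, Polynomial.eval_finset_sum, Polynomial.eval_prod]
  have hQeval : ∀ z : ℂ, Q.eval z = (n ! : ℂ) * f.eval (x + z) := by
    intro z
    simp [hQ, Polynomial.eval_comp]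
  have key : P = Q := by
    have hzero : P - Q = 0 := by
      apply Polynomial.eq_zero_of_natDegree_lt_card_of_eval_eq_zero (P - Q)
        (f := fun i : Fin (n+1) => -((i : ℕ) : ℂ))
      · intro i j hij
        simp only [neg_inj, Nat.cast_inj] at hij
        exact Fin.ext hij
      · intro i
        have him : (i : ℕ) ≤ n := Nat.lt_succ_iff.mp i.isLt
        set m : ℕ := (i : ℕ) with hm
        rw [Polynomial.eval_sub, hPeval, hQeval]
        have hsum : ∑ k ∈ Finset.range (n+1), c k *
            ∏ j ∈ (Finset.range (n+1)).erase k, (-(m:ℂ) + j)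
            = c m * ∏ j ∈ (Finset.range (n+1)).erase m, (-(m:ℂ) + j) := by
          apply Finset.sum_eq_single m
          · intro k hk hkm
            have hmmem : m ∈ (Finset.range (n+1)).erase k := by
              simp only [Finset.mem_erase, Finset.mem_range]
              exact ⟨fun h => hkm h.symm, by omega⟩
            rw [Finset.prod_eq_zero hmmem (by ring), mul_zero]
          · intro h
            exact absurd (Finset.mem_range.mpr (by omega)) h
        rw [hsum]
        have hprod : ∏ j ∈ (Finset.range (n+1)).erase m, (-(m:ℂ) + j)
            = (-1)^m * (m ! : ℂ) * ((n-m)! : ℂ) := by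
          rw [← melzak_prod_erase n m him]
          apply Finset.prod_congr rfl
          intro j _
          ring
        rw [hprod, hc]
        simp only
        have hx : x + -(m:ℂ) = x - m := by ring
        rw [hx]
        have heq : ((n.choose m : ℂ)) * (-1)^m * f.eval (x - m) *
              ((-1)^m * (m ! : ℂ) * ((n-m)! : ℂ))
            = ((n.choose m * m ! * (n-m)! : ℕ) : ℂ) * f.eval (x - m)
              * ((-1 : ℂ) * (-1))^m := by
          push_cast
          rw [mul_pow]
          ring
        rw [heq, Nat.choose_mul_factorial_mul_factorial him]
        norm_num
      · have hdP : P.natDegree ≤ n := by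
          apply Polynomial.natDegree_sum_le_of_forall_le
          intro k hk
          apply le_trans (Polynomial.natDegree_C_mul_le _ _)
          apply le_trans (Polynomial.natDegree_prod_le _ _)
          have : ∀ j ∈ (Finset.range (n+1)).erase k,
              (Polynomial.X + Polynomial.C (j:ℂ)).natDegree = 1 := by
            intro j _
            exact Polynomial.natDegree_X_add_C _
          rw [Finset.sum_congr rfl this, Finset.sum_const, smul_eq_mul, mul_one,
            Finset.card_erase_of_mem hk, Finset.card_range]
          omega
        have hdQ : Q.natDegree ≤ n := by
          apply le_trans (Polynomial.natDegree_C_mul_le _ _)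
          rw [Polynomial.natDegree_comp]
          have h1 : (Polynomial.C x + Polynomial.X).natDegree = 1 := by
            rw [add_comm]
            exact Polynomial.natDegree_X_add_C _
          rw [h1, mul_one]
          exact hf
        have : (P - Q).natDegree ≤ n :=
          le_trans (Polynomial.natDegree_sub_le _ _) (max_le hdP hdQ)
        simpa using Nat.lt_succ_of_le this
    exact sub_eq_zero.mp hzero
  have htot : (∏ j ∈ Finset.range (n+1), (y + j)) ≠ 0 :=
    Finset.prod_ne_zero_iff.mpr hy
  have hterm : ∀ k ∈ Finset.range (n+1), c k / (y + k)
      = c k * (∏ j ∈ (Finset.range (n+1)).erase k, (y + j))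
        / ∏ j ∈ Finset.range (n+1), (y + j) := by
    intro k hk
    rw [div_eq_div_iff (hy k hk) htot, ← Finset.mul_prod_erase _ _ hk]
    ring
  calc ∑ k ∈ Finset.range (n+1), c k / (y + k)
      = ∑ k ∈ Finset.range (n+1), c k *
          (∏ j ∈ (Finset.range (n+1)).erase k, (y + j))
          / ∏ j ∈ Finset.range (n+1), (y + j) := Finset.sum_congr rfl hterm
    _ = (∑ k ∈ Finset.range (n+1), c k *
          ∏ j ∈ (Finset.range (n+1)).erase k, (y + j))
          / ∏ j ∈ Finset.range (n+1), (y + j) := by rw [Finset.sum_div]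
    _ = P.eval y / ∏ j ∈ Finset.range (n+1), (y + j) := by rw [hPeval]
    _ = Q.eval y / ∏ j ∈ Finset.range (n+1), (y + j) := by rw [key]
    _ = (n ! : ℂ) * f.eval (x + y) / ∏ j ∈ Finset.range (n+1), (y + j) := by rw [hQeval]
end

section
/- Let n ≥ 0 be an integer and let f be a polynomial with complex coefficients of degree at most n+1, with a_{n+1} the coefficient of x^{n+1} in f. Then for all complex numbers x and y with y ∉ {0, -1, -2, ..., -n}, one has ∑_{k=0}^{n} C(n,k) (-1)^k f(x-k)/(y+k) = n! · f(x+y) / (y(y+1)⋯(y+n)) − n! · a_{n+1}. -/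
/-!
Dividing `f` by `X - (x + y)` gives `f t = f (x + y) + (t - x - y) * g t` with `deg g ≤ n` and
`g.coeff n = a_{n+1}`. At `t = x - k` the factor `t - x - y = -(y + k)` cancels the denominator,
so the sum splits into `f (x + y)` times the alternating sum `∑ C(n,k) (-1)^k / (y + k)` minus
`∑ C(n,k) (-1)^k g (x - k)`. Both are `n`-th forward differences, of `t ↦ t⁻¹` (which is
`(-1)^n n! / ∏ (y + j)`) and of `g` (which is `n! * g.coeff n`).
-/

open Finset Nat Polynomial fwdDiff

section AlternatingSum

variable {M G : Type*} [AddCommMonoid M] [AddCommGroup G]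

theorem sum_range_neg_one_pow_mul_choose_smul_eq_fwdDiff_iter (h : M) (f : M → G) (n : ℕ)
    (y : M) :
    ∑ k ∈ range (n + 1), ((-1 : ℤ) ^ k * n.choose k) • f (y + k • h) =
      (-1 : ℤ) ^ n • (Δ_[h])^[n] f y := by
  rw [fwdDiff_iter_eq_sum_shift, smul_sum]
  refine sum_congr rfl fun k hk => ?_
  obtain ⟨m, rfl⟩ := Nat.exists_eq_add_of_le (mem_range_succ_iff.mp hk)
  rw [smul_smul, Nat.add_sub_cancel_left]
  rw [pow_add, mul_assoc, ← mul_assoc ((-1) ^ m), ← mul_pow, neg_one_mul, neg_neg, one_pow,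
    one_mul]

end AlternatingSum

section Field

variable {K : Type*} [Field K]

theorem fwdDiff_iter_inv (n : ℕ) (y : K) (hy : ∀ k ∈ range (n + 1), y + k ≠ 0) :
    (Δ_[1])^[n] (fun t : K => t⁻¹) y = (-1) ^ n * n ! / ∏ j ∈ range (n + 1), (y + j) := by
  induction n generalizing y with
  | zero => simp
  | succ n ih =>
    have hy0 : y ≠ 0 := by simpa using hy 0 (by simp)
    have hshift : ∀ k ∈ range (n + 1), y + 1 + k ≠ 0 := fun k hk => by
      convert hy (k + 1) (by simpa using hk) using 1
      push_cast
      ring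
    have hmid : ∏ j ∈ range n, (y + 1 + j) ≠ 0 :=
      prod_ne_zero_iff.mpr fun k hk => hshift k (mem_range.mpr (by simp at hk; omega))
    rw [Function.iterate_succ_apply', fwdDiff, ih (y + 1) hshift,
      ih y fun k hk => hy k (by simp at hk ⊢; omega), prod_range_succ, prod_range_succ',
      prod_range_succ (fun j : ℕ => y + j), prod_range_succ']
    have hreindex : ∏ k ∈ range n, (y + (k + 1 : ℕ)) = ∏ k ∈ range n, (y + 1 + k) :=
      prod_congr rfl fun k _ => by push_cast; ring
    have hlast : y + (n + 1 : ℕ) = y + 1 + n := by push_cast; ring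
    have hyn : y + 1 + n ≠ 0 := hshift n (by simp)
    rw [hreindex, hlast, Nat.cast_zero, add_zero, factorial_succ]
    field_simp
    push_cast
    ring

theorem sum_range_choose_mul_neg_one_pow_div (n : ℕ) (y : K)
    (hy : ∀ k ∈ range (n + 1), y + k ≠ 0) :
    ∑ k ∈ range (n + 1), (n.choose k : K) * (-1) ^ k / (y + k) =
      n ! / ∏ j ∈ range (n + 1), (y + j) := by
  have h := sum_range_neg_one_pow_mul_choose_smul_eq_fwdDiff_iter 1 (fun t : K => t⁻¹) n y
  rw [fwdDiff_iter_inv n y hy] at h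
  simp only [zsmul_eq_mul, nsmul_one] at h
  push_cast at h
  rw [← mul_div_assoc, ← mul_assoc, ← mul_pow, neg_one_mul, neg_neg, one_pow, one_mul] at h
  rw [← h]
  refine sum_congr rfl fun k _ => ?_
  ring

end Field

namespace Polynomial

section CommRing

variable {R : Type*} [CommRing R]

theorem fwdDiff_iter_eval_of_natDegree_le {P : R[X]} {n : ℕ} (hP : P.natDegree ≤ n) (x : R) :
    (Δ_[1])^[n] P.eval x = n ! * P.coeff n := by
  rcases hP.lt_or_eq with hlt | rfl
  · rw [fwdDiff_iter_eq_zero_of_degree_lt hlt, coeff_eq_zero_of_natDegree_lt hlt, mul_zero,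
      Pi.zero_apply]
  · rw [fwdDiff_iter_degree_eq_factorial, Pi.smul_apply, smul_eq_mul, mul_comm]
    rfl

theorem sum_range_choose_mul_neg_one_pow_mul_eval_sub {P : R[X]} {n : ℕ} (hP : P.natDegree ≤ n)
    (x : R) :
    ∑ k ∈ range (n + 1), (n.choose k : R) * (-1) ^ k * P.eval (x - k) = n ! * P.coeff n := by
  rw [← fwdDiff_iter_eval_of_natDegree_le hP (x - n), fwdDiff_iter_eq_sum_shift,
    ← sum_range_reflect]
  refine sum_congr rfl fun k hk => ?_
  have hkn : k ≤ n := mem_range_succ_iff.mp hk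
  rw [add_tsub_cancel_right, choose_symm hkn, nsmul_one, zsmul_eq_mul, Nat.cast_sub hkn]
  push_cast
  ring_nf

theorem eval_eq_eval_add_mul_eval_divByMonic (p : R[X]) (a t : R) :
    p.eval t = p.eval a + (t - a) * (p /ₘ (X - C a)).eval t := by
  conv_lhs => rw [← modByMonic_add_div p (X - C a), modByMonic_X_sub_C_eq_C_eval]
  simp only [eval_add, eval_C, eval_mul, eval_sub, eval_X]

theorem natDegree_divByMonic_X_sub_C_le [Nontrivial R] {p : R[X]} {n : ℕ}
    (hp : p.natDegree ≤ n + 1) (a : R) : (p /ₘ (X - C a)).natDegree ≤ n := by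
  rw [natDegree_divByMonic p (monic_X_sub_C a), natDegree_X_sub_C]
  omega

theorem coeff_divByMonic_X_sub_C_of_natDegree_le [Nontrivial R] {p : R[X]} {n : ℕ}
    (hp : p.natDegree ≤ n + 1) (a : R) : (p /ₘ (X - C a)).coeff n = p.coeff (n + 1) := by
  rw [coeff_divByMonic_X_sub_C_rec, coeff_eq_zero_of_natDegree_lt
    ((natDegree_divByMonic_X_sub_C_le hp a).trans_lt n.lt_succ_self), mul_zero, add_zero]

end CommRing

end Polynomial

theorem melzak_formula_deg_succ (n : ℕ) (f : Polynomial ℂ) (hf : f.natDegree ≤ n + 1)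
    (x y : ℂ) (hy : ∀ k ∈ Finset.range (n + 1), y + k ≠ 0) :
    ∑ k ∈ Finset.range (n + 1), (n.choose k : ℂ) * (-1) ^ k * f.eval (x - k) / (y + k) =
      (n ! : ℂ) * f.eval (x + y) / (∏ j ∈ Finset.range (n + 1), (y + j)) -
        (n ! : ℂ) * f.coeff (n + 1) := by
  set q := f /ₘ (X - C (x + y))
  have hterm : ∀ k ∈ range (n + 1),
      (n.choose k : ℂ) * (-1) ^ k * f.eval (x - k) / (y + k) =
        f.eval (x + y) * ((n.choose k : ℂ) * (-1) ^ k / (y + k)) -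
          (n.choose k : ℂ) * (-1) ^ k * q.eval (x - k) := by
    intro k hk
    rw [f.eval_eq_eval_add_mul_eval_divByMonic (x + y) (x - k)]
    field_simp [hy k hk]
    ring
  rw [sum_congr rfl hterm, sum_sub_distrib, ← mul_sum, sum_range_choose_mul_neg_one_pow_div n y hy,
    sum_range_choose_mul_neg_one_pow_mul_eval_sub (natDegree_divByMonic_X_sub_C_le hf _),
    coeff_divByMonic_X_sub_C_of_natDegree_le hf]
  ring
end

section
/- For every integer n ≥ 0 and every complex number y with y ∉ {0, -1, -2, ..., -n}, one has ∑_{k=0}^{n} C(n,k) (-1)^k · k!/((y+1)(y+2)⋯(y+k)) = y/(y+n) (where for k = 0 the empty product (y+1)⋯(y+k) equals 1); that is, the binomial transform of the reciprocals of the generalized binomial coefficients C(k+y,k) = (y+1)⋯(y+k)/k! equals y/(y+n). -/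
/-!
Multiplying the `k`-th term by `1 = y / y` turns it into `y · g_y(k)` with
`g_y(k) = k! / (y (y+1) ⋯ (y+k))`, so it suffices to show `∑ₖ C(n,k) (-1)^k g_y(k) = 1/(y+n)`.
The point is that `g_y(k) - g_y(k+1) = g_{y+1}(k)`, while Pascal's rule rewrites an alternating
binomial sum of order `n+1` as one of order `n` applied to first differences; hence the sum for
`(n+1, y)` equals the sum for `(n, y+1)`, and induction on `n` brings it down to `g_{y+n}(0)`.
-/

open Finset Nat

theorem sum_range_succ_choose_mul_neg_one_pow {R : Type*} [CommRing R] (f : ℕ → R) (n : ℕ) :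
    ∑ k ∈ range (n + 2), ((n + 1).choose k : R) * (-1) ^ k * f k =
      ∑ k ∈ range (n + 1), (n.choose k : R) * (-1) ^ k * (f k - f (k + 1)) := by
  have hpascal : ∑ k ∈ range (n + 2), ((n + 1).choose k : R) * (-1) ^ k * f k =
      ∑ k ∈ range (n + 2), (n.choose k : R) * (-1) ^ k * f k +
        ∑ k ∈ range (n + 1), (n.choose k : R) * (-1) ^ (k + 1) * f (k + 1) := by
    rw [sum_range_succ' _ (n + 1), sum_range_succ' (fun k ↦ (n.choose k : R) * _ * _) (n + 1)]
    simp only [Nat.choose_succ_succ, Nat.cast_add, add_mul, sum_add_distrib, Nat.choose_zero_right]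
    ring
  rw [hpascal, sum_range_succ _ (n + 1), Nat.choose_succ_self]
  simp only [mul_sub, sum_sub_distrib, pow_succ]
  simp [sum_neg_distrib, sub_eq_add_neg]

theorem factorial_div_prod_sub_succ {K : Type*} [Field K] (y : K) (k : ℕ)
    (hy : ∏ j ∈ range (k + 2), (y + j) ≠ 0) :
    (k ! : K) / ∏ j ∈ range (k + 1), (y + j) - ((k + 1)! : K) / ∏ j ∈ range (k + 2), (y + j) =
      (k ! : K) / ∏ j ∈ range (k + 1), (y + 1 + j) := by
  have hshift : ∏ j ∈ range (k + 2), (y + j) = y * ∏ j ∈ range (k + 1), (y + 1 + j) := by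
    rw [prod_range_succ', mul_comm]; simp [add_assoc, add_comm (1 : K)]
  have hlast : ∏ j ∈ range (k + 2), (y + j) = (∏ j ∈ range (k + 1), (y + j)) * (y + (k + 1)) := by
    rw [prod_range_succ]; push_cast; rfl
  have hA : ∏ j ∈ range (k + 1), (y + j) ≠ 0 := left_ne_zero_of_mul (hlast ▸ hy)
  have hB : ∏ j ∈ range (k + 1), (y + 1 + j) ≠ 0 := right_ne_zero_of_mul (hshift ▸ hy)
  rw [div_sub_div _ _ hA hy, div_eq_div_iff (mul_ne_zero hA hy) hB, Nat.factorial_succ]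
  push_cast
  linear_combination (k ! : K) * (∏ j ∈ range (k + 1), (y + 1 + j)) * hlast -
    (k ! : K) * (∏ j ∈ range (k + 1), (y + j)) * hshift

theorem sum_choose_mul_neg_one_pow_factorial_div_prod {K : Type*} [Field K] (n : ℕ) (y : K)
    (hy : ∀ j ≤ n, y + j ≠ 0) :
    ∑ k ∈ range (n + 1), (n.choose k : K) * (-1) ^ k * ((k ! : K) / ∏ j ∈ range (k + 1), (y + j)) =
      (y + n)⁻¹ := by
  induction n generalizing y with
  | zero => simp
  | succ n ih =>
    have hy' : ∀ j ≤ n, y + 1 + j ≠ 0 := fun j hj ↦ by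
      simpa [add_assoc, add_comm (1 : K)] using hy (j + 1) (by omega)
    rw [sum_range_succ_choose_mul_neg_one_pow]
    calc _ = ∑ k ∈ range (n + 1), (n.choose k : K) * (-1) ^ k *
          ((k ! : K) / ∏ j ∈ range (k + 1), (y + 1 + j)) := by
          refine sum_congr rfl fun k hk ↦ ?_
          rw [factorial_div_prod_sub_succ]
          exact prod_ne_zero_iff.2 fun j hj ↦ hy j (by simp at hk hj; omega)
      _ = (y + (n + 1 : ℕ))⁻¹ := by rw [ih _ hy']; push_cast; ring

theorem melzak_inverse_transform (n : ℕ) (y : ℂ)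
    (hy : ∀ k ∈ Finset.range (n + 1), y + k ≠ 0) :
    ∑ k ∈ Finset.range (n + 1),
        (n.choose k : ℂ) * (-1) ^ k * ((k ! : ℂ) / ∏ j ∈ Finset.range k, (y + (j + 1))) =
      y / (y + n) := by
  have hy0 : y ≠ 0 := by simpa using hy 0 (by simp)
  have hterm (k : ℕ) : (k ! : ℂ) / ∏ j ∈ range k, (y + (j + 1)) =
      y * ((k ! : ℂ) / ∏ j ∈ range (k + 1), (y + j)) := by
    rw [prod_range_succ', Nat.cast_zero, add_zero, mul_comm _ y, ← mul_div_assoc,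
      mul_div_mul_left _ _ hy0]
    push_cast; rfl
  simp only [hterm, mul_left_comm _ y, ← mul_sum]
  rw [sum_choose_mul_neg_one_pow_factorial_div_prod n y fun j hj ↦ hy j (by simpa using hj),
    div_eq_mul_inv]
end

section
/- Let f(t) = a_0 + a_1 t + ⋯ + a_M t^M be a polynomial with complex coefficients. Then for every positive integer n and every complex number λ with λ ∉ {0, 1, 2, ..., n}, one has ∑_{k=0}^{n} C(n,k) (-1)^k f(k)/(k-λ) = f(λ) · ∑_{k=0}^{n} C(n,k) (-1)^k/(k-λ) + (-1)^n n! · ∑_{m=n+1}^{M} a_m ( ∑_{j=0}^{m-1} λ^j S(m-j-1, n) ), where the last sum is empty (equal to zero) when M ≤ n. -/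
/-!
Since `(f(k) - f(λ)) / (k - λ) = ∑ₘ aₘ ∑_{j<m} λ^j k^(m-j-1)`, the difference of the two sides is
a combination of the alternating binomial sums `∑ₖ C(n,k) (-1)^k k^p`, i.e. of the `n`-th forward
differences of `x ↦ x^p` at `0`. Expanding `x^p = ∑ⱼ S(p,j) j! C(x,j)` and using
`Δⁿ C(·,j) (0) = [j = n]` evaluates them as `(-1)^n n! S(p,n)`, which vanishes for `p < n`; hence
only the coefficients `aₘ` with `m > n` contribute.
-/

open Finset Nat

/-- Stirling numbers of the second kind. -/
def stirling2 : ℕ → ℕ → ℕ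
  | 0, 0 => 1
  | 0, _ + 1 => 0
  | _ + 1, 0 => 0
  | p + 1, k + 1 => (k + 1) * stirling2 p (k + 1) + stirling2 p k

open fwdDiff

theorem stirling2_eq_stirlingSecond : ∀ p k, stirling2 p k = stirlingSecond p k
  | 0, 0 | 0, _ + 1 | _ + 1, 0 => rfl
  | p + 1, k + 1 => by
    rw [stirling2, stirlingSecond_succ_succ, stirling2_eq_stirlingSecond p,
      stirling2_eq_stirlingSecond p]

theorem Nat.mul_choose_eq_succ_mul_choose_succ_add (k j : ℕ) :
    k * k.choose j = (j + 1) * k.choose (j + 1) + j * k.choose j := by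
  rcases le_or_gt j k with h | h
  · rw [mul_comm (j + 1), choose_succ_right_eq, mul_comm j, ← Nat.mul_add, Nat.sub_add_cancel h,
      mul_comm]
  · simp [choose_eq_zero_of_lt h, choose_eq_zero_of_lt (h.trans (lt_add_one j))]

theorem Nat.pow_eq_sum_stirlingSecond_mul_factorial_mul_choose (k p : ℕ) :
    k ^ p = ∑ j ∈ range (p + 1), stirlingSecond p j * j ! * k.choose j := by
  induction p with
  | zero => simp
  | succ p ih =>
    have hshift : ∑ j ∈ range (p + 1), stirlingSecond p j * (j * j ! * k.choose j) =
        ∑ j ∈ range (p + 1),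
          (j + 1) * stirlingSecond p (j + 1) * ((j + 1)! * k.choose (j + 1)) := by
      rw [sum_range_succ', sum_range_succ, stirlingSecond_eq_zero_of_lt (lt_add_one p)]
      simp [factorial_succ, mul_comm, mul_left_comm, mul_assoc]
    calc k ^ (p + 1)
        = ∑ j ∈ range (p + 1), stirlingSecond p j * ((j + 1)! * k.choose (j + 1)) +
            ∑ j ∈ range (p + 1), stirlingSecond p j * (j * j ! * k.choose j) := by
          rw [pow_succ, ih, sum_mul, ← sum_add_distrib]
          refine sum_congr rfl fun j _ => ?_
          rw [mul_assoc, mul_assoc, mul_comm _ k, mul_choose_eq_succ_mul_choose_succ_add,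
            factorial_succ]
          ring
      _ = ∑ j ∈ range (p + 2), stirlingSecond (p + 1) j * j ! * k.choose j := by
          rw [hshift, ← sum_add_distrib, sum_range_succ' _ (p + 1)]
          simp only [stirlingSecond_succ_succ, stirlingSecond_succ_zero, zero_mul, add_zero]
          exact sum_congr rfl fun j _ => by ring

theorem fwdDiff_iter_pow_eq_factorial_mul_stirlingSecond (n p : ℕ) :
    Δ_[1] ^[n] (fun x : ℕ ↦ (x : ℤ) ^ p) 0 = n ! * stirlingSecond p n := by
  have hexpand : (fun x : ℕ ↦ (x : ℤ) ^ p) =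
      ∑ j ∈ range (p + 1),
        ((stirlingSecond p j * j ! : ℕ) : ℤ) • fun x : ℕ ↦ (x.choose j : ℤ) := by
    ext x
    simp only [Finset.sum_apply, Pi.smul_apply, smul_eq_mul]
    exact_mod_cast pow_eq_sum_stirlingSecond_mul_factorial_mul_choose x p
  rw [hexpand, fwdDiff_iter_finsetSum, Finset.sum_apply]
  simp only [fwdDiff_iter_const_smul, Pi.smul_apply, fwdDiff_iter_choose_zero, smul_eq_mul,
    mul_ite, mul_one, mul_zero, sum_ite_eq, mem_range]
  split_ifs with h
  · push_cast; ring
  · rw [stirlingSecond_eq_zero_of_lt (by omega)]; simp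

theorem sum_choose_mul_neg_one_pow_mul_pow {R : Type*} [CommRing R] (n p : ℕ) :
    ∑ k ∈ range (n + 1), (n.choose k : R) * (-1) ^ k * (k : R) ^ p =
      (-1) ^ n * n ! * stirlingSecond p n := by
  have hZ : ∑ k ∈ range (n + 1), (-1 : ℤ) ^ (n - k) * n.choose k * (k : ℤ) ^ p =
      n ! * stirlingSecond p n := by
    simpa using (fwdDiff_iter_eq_sum_shift 1 (fun x : ℕ ↦ (x : ℤ) ^ p) n 0).symm.trans
      (fwdDiff_iter_pow_eq_factorial_mul_stirlingSecond n p)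
  have hsign : ∀ k ∈ range (n + 1),
      (n.choose k : R) * (-1) ^ k * (k : R) ^ p =
        (-1) ^ n * ((-1) ^ (n - k) * n.choose k * (k : R) ^ p) := by
    intro k hk
    obtain ⟨d, rfl⟩ := Nat.exists_eq_add_of_le (mem_range_succ_iff.1 hk)
    have hd : ((-1 : R) ^ d) * (-1) ^ d = 1 := by rw [← mul_pow]; norm_num
    rw [Nat.add_sub_cancel_left, pow_add]
    linear_combination (-((k + d).choose k * (-1) ^ k * (k : R) ^ p)) * hd
  rw [sum_congr rfl hsign, ← mul_sum, mul_assoc]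
  congr 1
  exact_mod_cast congrArg (Int.cast : ℤ → R) hZ

theorem Polynomial.eval_sub_eval_eq_sub_mul_sum {R : Type*} [CommRing R] {f : Polynomial R}
    {N : ℕ} (hN : f.natDegree < N) (x y : R) :
    f.eval x - f.eval y =
      (x - y) * ∑ m ∈ range N, f.coeff m * ∑ j ∈ range m, y ^ j * x ^ (m - j - 1) := by
  rw [eval_eq_sum_range' hN, eval_eq_sum_range' hN, ← sum_sub_distrib, mul_sum]
  refine sum_congr rfl fun m _ => ?_
  have hgeom := geom_sum₂_mul y x m
  simp_rw [Nat.sub_right_comm m 1] at hgeom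
  linear_combination f.coeff m * hgeom

theorem sum_choose_mul_neg_one_pow_mul_sum_pow {R : Type*} [CommRing R] (n N : ℕ) (c : ℕ → R)
    (y : R) :
    ∑ k ∈ range (n + 1), (n.choose k : R) * (-1) ^ k *
        ∑ m ∈ range N, c m * ∑ j ∈ range m, y ^ j * (k : R) ^ (m - j - 1) =
      (-1) ^ n * n ! *
        ∑ m ∈ range N, c m * ∑ j ∈ range m, y ^ j * stirlingSecond (m - j - 1) n := by
  simp_rw [mul_sum]
  rw [sum_comm]
  refine sum_congr rfl fun m _ => ?_
  rw [sum_comm]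
  refine sum_congr rfl fun j _ => ?_
  calc _ = c m * y ^ j *
        ∑ k ∈ range (n + 1), (n.choose k : R) * (-1) ^ k * (k : R) ^ (m - j - 1) := by
        rw [mul_sum]
        exact sum_congr rfl fun k _ => by ring
    _ = _ := by
        rw [sum_choose_mul_neg_one_pow_mul_pow]
        ring

theorem sum_range_mul_sum_stirlingSecond_eq_sum_Icc {R : Type*} [CommRing R] (n M : ℕ)
    (c : ℕ → R) (y : R) :
    ∑ m ∈ range (M + 1), c m * ∑ j ∈ range m, y ^ j * (stirlingSecond (m - j - 1) n : R) =
      ∑ m ∈ Icc (n + 1) M, c m * ∑ j ∈ range m, y ^ j * (stirlingSecond (m - j - 1) n : R) := by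
  refine (sum_subset (fun m hm => ?_) fun m hm hm' => ?_).symm
  · rw [mem_Icc] at hm
    exact mem_range_succ_iff.2 hm.2
  have hmn : m ≤ n := by
    rw [mem_range] at hm
    rw [mem_Icc] at hm'
    omega
  refine mul_eq_zero_of_right _ (sum_eq_zero fun j hj => ?_)
  rw [stirlingSecond_eq_zero_of_lt (by rw [mem_range] at hj; omega), cast_zero, mul_zero]

theorem melzak_arbitrary_degree_general (n : ℕ) (M : ℕ) (f : Polynomial ℂ)
    (hf : f.natDegree ≤ M) (l : ℂ) (hl : ∀ k ∈ Finset.range (n + 1), l ≠ k) :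
    ∑ k ∈ Finset.range (n + 1), (n.choose k : ℂ) * (-1) ^ k * f.eval (k : ℂ) / ((k : ℂ) - l) =
      f.eval l * ∑ k ∈ Finset.range (n + 1), (n.choose k : ℂ) * (-1) ^ k / ((k : ℂ) - l) +
        (-1) ^ n * (n ! : ℂ) *
          ∑ m ∈ Finset.Icc (n + 1) M,
            f.coeff m * ∑ j ∈ Finset.range m, l ^ j * (stirling2 (m - j - 1) n : ℂ) := by
  simp_rw [stirling2_eq_stirlingSecond]
  rw [← sum_range_mul_sum_stirlingSecond_eq_sum_Icc, ← sum_choose_mul_neg_one_pow_mul_sum_pow,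
    ← sub_eq_iff_eq_add', mul_sum, ← sum_sub_distrib]
  refine sum_congr rfl fun k hk => ?_
  have hkl : (k : ℂ) - l ≠ 0 := sub_ne_zero.2 (hl k hk).symm
  have hdiff := f.eval_sub_eval_eq_sub_mul_sum (Nat.lt_succ_of_le hf) k l
  calc _ = (n.choose k : ℂ) * (-1) ^ k * ((f.eval (k : ℂ) - f.eval l) / ((k : ℂ) - l)) := by
        ring
    _ = _ := by rw [hdiff, mul_div_cancel_left₀ _ hkl]

theorem melzak_arbitrary_degree (n : ℕ) (hn : 0 < n) (M : ℕ) (f : Polynomial ℂ)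
    (hf : f.natDegree ≤ M) (l : ℂ) (hl : ∀ k ∈ Finset.range (n + 1), l ≠ k) :
    ∑ k ∈ Finset.range (n + 1), (n.choose k : ℂ) * (-1) ^ k * f.eval (k : ℂ) / ((k : ℂ) - l) =
      f.eval l * ∑ k ∈ Finset.range (n + 1), (n.choose k : ℂ) * (-1) ^ k / ((k : ℂ) - l) +
        (-1) ^ n * (n ! : ℂ) *
          ∑ m ∈ Finset.Icc (n + 1) M,
            f.coeff m * ∑ j ∈ Finset.range m, l ^ j * (stirling2 (m - j - 1) n : ℂ) :=
  melzak_arbitrary_degree_general n M f hf l hl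
end

section
/- Let n be a positive integer and let f(t) = a_0 + a_1 t + ⋯ + a_{n+2} t^{n+2} be a polynomial with complex coefficients of degree at most n+2. Then for every complex number λ with λ ∉ {0, 1, 2, ..., n}, one has ∑_{k=0}^{n} C(n,k) (-1)^k f(k)/(k-λ) = f(λ) · ∑_{k=0}^{n} C(n,k) (-1)^k/(k-λ) + (-1)^n n! ( a_{n+1} + a_{n+2} ( n(n+1)/2 + λ ) ). -/
/-!
Dividing `f - f(λ)` by `t - λ` gives a polynomial `g` of degree at most `n + 1` with
`f(k) / (k - λ) = f(λ) / (k - λ) + g(k)`, so everything reduces to the alternating binomial sum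
`∑ C(n,k) (-1)^k g(k) = (-1)^n Δⁿg(0)`. Subtracting `g_{n+1}` times the falling factorial
`t (t - 1) ⋯ (t - n)`, which vanishes at `0, …, n`, leaves a polynomial of degree `≤ n`
whose `n`-th difference is `n!` times its `t^n` coefficient, `g_n + g_{n+1} (0 + 1 + ⋯ + n)`.
-/

open Finset Nat Polynomial
open scoped fwdDiff

theorem descPochhammer_succ_coeff_self {R : Type*} [Ring R] [Nontrivial R] [NoZeroDivisors R]
    (n : ℕ) : (descPochhammer R (n + 1)).coeff n = -∑ i ∈ range (n + 1), (i : R) := by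
  induction n with
  | zero => simp
  | succ n ih =>
    have hlead : (descPochhammer R (n + 1)).coeff (n + 1) = 1 := by
      simpa using (monic_descPochhammer R (n + 1)).coeff_natDegree
    rw [descPochhammer_succ_right, ← C_eq_natCast, coeff_mul_X_sub_C, ih, hlead,
      sum_range_succ _ (n + 1), one_mul]
    push_cast
    abel

section CommRing

variable {R : Type*} [CommRing R]

theorem Polynomial.fwdDiff_iter_eval_eq_coeff_mul_factorial {P : R[X]} {n : ℕ}
    (hP : P.natDegree ≤ n) (x : R) : Δ_[1] ^[n] P.eval x = P.coeff n * n ! := by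
  rcases hP.lt_or_eq with hlt | rfl
  · rw [fwdDiff_iter_eq_zero_of_degree_lt hlt, coeff_eq_zero_of_natDegree_lt hlt]
    simp
  · rw [fwdDiff_iter_degree_eq_factorial]
    rfl

theorem sum_range_choose_mul_neg_one_pow_mul_eq_fwdDiff_iter (f : R → R) (n : ℕ) :
    ∑ k ∈ range (n + 1), (n.choose k : R) * (-1) ^ k * f k = (-1) ^ n * Δ_[1] ^[n] f 0 := by
  rw [fwdDiff_iter_eq_sum_shift, mul_sum]
  refine sum_congr rfl fun k hk => ?_
  have hkn : k ≤ n := Nat.lt_succ_iff.mp (mem_range.mp hk)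
  have hsign : ((-1) ^ n * (-1) ^ (n - k) : R) = (-1) ^ k := by
    rw [← pow_add, show n + (n - k) = k + 2 * (n - k) by omega, pow_add, pow_mul]
    simp
  rw [zsmul_eq_mul]
  push_cast
  rw [zero_add, nsmul_one, ← mul_assoc, ← mul_assoc, hsign, mul_comm ((-1 : R) ^ k)]

theorem Polynomial.sum_range_choose_mul_neg_one_pow_mul_eval [IsDomain R] {p : R[X]} {n : ℕ}
    (hp : p.natDegree ≤ n + 1) :
    ∑ k ∈ range (n + 1), (n.choose k : R) * (-1) ^ k * p.eval (k : R) =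
      (-1) ^ n * n ! * (p.coeff n + p.coeff (n + 1) * ∑ i ∈ range (n + 1), (i : R)) := by
  set q := p - C (p.coeff (n + 1)) * descPochhammer R (n + 1)
  have hq_eval : ∀ k ∈ range (n + 1), q.eval (k : R) = p.eval (k : R) := fun k hk => by
    simp [q, descPochhammer_eval_coe_nat_of_lt (mem_range.mp hk)]
  have hq_deg : q.natDegree ≤ n := by
    rw [natDegree_le_iff_coeff_eq_zero]
    intro N hN
    have hlead := (monic_descPochhammer R (n + 1)).coeff_natDegree
    rw [descPochhammer_natDegree] at hlead
    rcases (Nat.succ_le_of_lt hN).eq_or_lt with rfl | hlt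
    · simp [q, hlead]
    · simp [q, coeff_eq_zero_of_natDegree_lt (hp.trans_lt hlt),
        coeff_eq_zero_of_natDegree_lt ((descPochhammer_natDegree R (n + 1)).trans_lt hlt)]
  calc ∑ k ∈ range (n + 1), (n.choose k : R) * (-1) ^ k * p.eval (k : R)
      = ∑ k ∈ range (n + 1), (n.choose k : R) * (-1) ^ k * q.eval (k : R) :=
        sum_congr rfl fun k hk => by rw [hq_eval k hk]
    _ = (-1) ^ n * (q.coeff n * n !) := by
        rw [sum_range_choose_mul_neg_one_pow_mul_eq_fwdDiff_iter (fun x => q.eval x),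
          fwdDiff_iter_eval_eq_coeff_mul_factorial hq_deg]
    _ = _ := by
        simp only [q, coeff_sub, coeff_C_mul, descPochhammer_succ_coeff_self]
        ring

end CommRing

section Field

variable {K : Type*} [Field K]

theorem Polynomial.X_sub_C_mul_divByMonic_eq_sub_C_eval (f : K[X]) (a : K) :
    (X - C a) * (f /ₘ (X - C a)) = f - C (f.eval a) := by
  rw [X_sub_C_mul_divByMonic_eq_sub_modByMonic, modByMonic_X_sub_C_eq_C_eval]

theorem Polynomial.sum_mul_eval_div_sub_eq {ι : Type*} (s : Finset ι) (w x : ι → K) (f : K[X])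
    (l : K) (hx : ∀ i ∈ s, x i ≠ l) :
    ∑ i ∈ s, w i * f.eval (x i) / (x i - l) =
      f.eval l * ∑ i ∈ s, w i / (x i - l) + ∑ i ∈ s, w i * (f /ₘ (X - C l)).eval (x i) := by
  rw [mul_sum, ← sum_add_distrib]
  refine sum_congr rfl fun i hi => ?_
  have hne : x i - l ≠ 0 := sub_ne_zero.mpr (hx i hi)
  have heval : (x i - l) * (f /ₘ (X - C l)).eval (x i) = f.eval (x i) - f.eval l := by
    simpa using congrArg (eval (x i)) (X_sub_C_mul_divByMonic_eq_sub_C_eval f l)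
  rw [eq_add_of_sub_eq' heval.symm]
  field_simp

theorem sum_range_succ_natCast_eq_mul_div_two [CharZero K] (n : ℕ) :
    ∑ i ∈ range (n + 1), (i : K) = n * (n + 1) / 2 := by
  rw [eq_div_iff two_ne_zero]
  have h : (∑ i ∈ range (n + 1), i) * 2 = n * (n + 1) := by
    rw [sum_range_id_mul_two, add_tsub_cancel_right, mul_comm]
  simpa using congrArg (Nat.cast : ℕ → K) h

end Field

theorem melzak_deg_n_add_two_general (n : ℕ) (f : Polynomial ℂ)
    (hf : f.natDegree ≤ n + 2) (l : ℂ) (hl : ∀ k ∈ Finset.range (n + 1), l ≠ k) :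
    ∑ k ∈ Finset.range (n + 1), (n.choose k : ℂ) * (-1) ^ k * f.eval (k : ℂ) / ((k : ℂ) - l) =
      f.eval l * ∑ k ∈ Finset.range (n + 1), (n.choose k : ℂ) * (-1) ^ k / ((k : ℂ) - l) +
        (-1) ^ n * (n ! : ℂ) *
          (f.coeff (n + 1) + f.coeff (n + 2) * ((n * (n + 1) : ℂ) / 2 + l)) := by
  set g := f /ₘ (X - C l)
  have hg : g.natDegree ≤ n + 1 := by
    rw [natDegree_divByMonic f (monic_X_sub_C l), natDegree_X_sub_C]
    omega
  have hcoeff (m : ℕ) : f.coeff (m + 1) = g.coeff m - l * g.coeff (m + 1) := by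
    simpa [coeff_X_sub_C_mul, coeff_C] using
      (congrArg (coeff · (m + 1)) (X_sub_C_mul_divByMonic_eq_sub_C_eval f l)).symm
  rw [sum_mul_eval_div_sub_eq (range (n + 1)) (fun k => (n.choose k : ℂ) * (-1) ^ k)
      (fun k => k) f l fun k hk => (hl k hk).symm,
    sum_range_choose_mul_neg_one_pow_mul_eval hg, hcoeff n, hcoeff (n + 1),
    coeff_eq_zero_of_natDegree_lt (show g.natDegree < n + 2 by omega),
    sum_range_succ_natCast_eq_mul_div_two]
  ring

theorem melzak_deg_n_add_two (n : ℕ) (hn : 0 < n) (f : Polynomial ℂ)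
    (hf : f.natDegree ≤ n + 2) (l : ℂ) (hl : ∀ k ∈ Finset.range (n + 1), l ≠ k) :
    ∑ k ∈ Finset.range (n + 1), (n.choose k : ℂ) * (-1) ^ k * f.eval (k : ℂ) / ((k : ℂ) - l) =
      f.eval l * ∑ k ∈ Finset.range (n + 1), (n.choose k : ℂ) * (-1) ^ k / ((k : ℂ) - l) +
        (-1) ^ n * (n ! : ℂ) *
          (f.coeff (n + 1) + f.coeff (n + 2) * ((n * (n + 1) : ℂ) / 2 + l)) :=
  melzak_deg_n_add_two_general n f hf l hl
end

section
/- For every integer n ≥ 0 and every complex number λ with |λ| > n, the series ∑_{m=n}^{∞} S(m,n)/λ^{m+1} converges and one has n!/(λ(λ-1)(λ-2)⋯(λ-n)) = n! ∑_{m=n}^{∞} S(m,n)/λ^{m+1}. -/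
/-!
Put `x = 1/λ`. Expanding the recurrence `S(n+1+m, n+1) = (n+1) S(n+m, n+1) + S(n+m, n)` shows that
the coefficients `S(n+1+m, n+1)` are the Cauchy product of the coefficients `S(n+m, n)` with the
powers of `n+1`. Hence, by induction on `n`, `∑ₘ S(n+m, n) xᵐ = ∏_{k=1}^{n} (1 - k x)⁻¹` whenever
`n |x| < 1`, each step multiplying by one geometric series. Multiplying by `n! xⁿ⁺¹` gives the claim,
since `λ(λ-1)⋯(λ-n) = λⁿ⁺¹ ∏_{k=1}^{n} (1 - k/λ)`.
-/

open Finset Nat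

lemma stirling2_eq_zero_of_lt : ∀ {m k : ℕ}, m < k → stirling2 m k = 0
  | 0, _ + 1, _ => rfl
  | m + 1, k + 1, h => by
    rw [stirling2, stirling2_eq_zero_of_lt (by omega), stirling2_eq_zero_of_lt (by omega),
      mul_zero, add_zero]

lemma stirling2_self : ∀ n : ℕ, stirling2 n n = 1
  | 0 => rfl
  | n + 1 => by
    rw [stirling2, stirling2_eq_zero_of_lt n.lt_succ_self, stirling2_self n, mul_zero, zero_add]

lemma stirling2_succ_add_eq_sum_antidiagonal (n m : ℕ) :
    stirling2 (n + 1 + m) (n + 1) =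
      ∑ p ∈ antidiagonal m, stirling2 (n + p.1) n * (n + 1) ^ p.2 := by
  induction m with
  | zero => simp [stirling2_self]
  | succ m ih =>
    rw [Nat.sum_antidiagonal_succ', ← add_assoc, stirling2, ih, mul_sum]
    simp only [pow_succ, pow_zero, mul_one, ← add_assoc]
    rw [add_comm, add_right_comm n 1 m]
    congr 1
    exact sum_congr rfl fun p _ => by ring

lemma HasSum.mul_antidiagonal_of_summable_norm {R : Type*} [NormedRing R] [CompleteSpace R]
    {f g : ℕ → R} {s t : R} (hf : HasSum f s) (hg : HasSum g t)
    (hf' : Summable fun n => ‖f n‖) (hg' : Summable fun n => ‖g n‖) :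
    HasSum (fun n => ∑ p ∈ antidiagonal n, f p.1 * g p.2) (s * t) := by
  rw [← hf.tsum_eq, ← hg.tsum_eq, tsum_mul_tsum_eq_tsum_sum_antidiagonal_of_summable_norm hf' hg']
  exact (summable_norm_sum_mul_antidiagonal_of_summable_norm hf' hg').of_norm.hasSum

lemma hasSum_stirling2_mul_pow (n : ℕ) (x : ℂ) (hx : n * ‖x‖ < 1) :
    HasSum (fun m => (stirling2 (n + m) n : ℂ) * x ^ m)
      (∏ k ∈ range n, (1 - (k + 1) * x))⁻¹ := by
  induction n generalizing x with
  | zero =>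
    simp only [zero_add, range_zero, prod_empty, inv_one]
    convert hasSum_ite_eq 0 (1 : ℂ) with m
    cases m <;> simp [stirling2]
  | succ n ih =>
    have hx' : n * ‖x‖ < 1 := by push_cast at hx; nlinarith [norm_nonneg x]
    have hgeom : ‖((n : ℂ) + 1) * x‖ < 1 := by
      rw [norm_mul, ← Nat.cast_succ, Complex.norm_natCast]; push_cast at hx ⊢; exact hx
    -- the norms of the coefficients form the same series, evaluated at the real point `‖x‖`
    have hnorm : Summable fun m => ‖(stirling2 (n + m) n : ℂ) * x ^ m‖ := by
      have := (ih ‖x‖ (by rwa [Complex.norm_real, norm_norm])).summable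
      refine Complex.summable_ofReal.mp (this.congr fun m => ?_)
      simp [norm_pow]
    have hcauchy := (ih x hx').mul_antidiagonal_of_summable_norm
      (hasSum_geometric_of_norm_lt_one hgeom) hnorm
      (summable_norm_geometric_of_norm_lt_one hgeom)
    rw [prod_range_succ, mul_inv]
    refine hcauchy.congr_fun fun m => ?_
    rw [stirling2_succ_add_eq_sum_antidiagonal, Nat.cast_sum, sum_mul]
    refine sum_congr rfl fun p hp => ?_
    rw [← mem_antidiagonal.mp hp, mul_pow]
    push_cast
    ring

lemma prod_range_succ_sub_natCast {K : Type*} [Field K] (n : ℕ) {l : K} (hl : l ≠ 0) :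
    ∏ j ∈ range (n + 1), (l - j) = l ^ (n + 1) * ∏ k ∈ range n, (1 - (k + 1) * l⁻¹) := by
  rw [prod_range_succ', Nat.cast_zero, sub_zero, _root_.pow_succ', mul_comm, mul_assoc,
    ← card_range n, ← prod_const, card_range, ← prod_mul_distrib]
  congr 1
  refine prod_congr rfl fun k _ => ?_
  field_simp
  push_cast
  ring

theorem stirling2_generating_series (n : ℕ) (l : ℂ) (hl : n < ‖l‖) :
    HasSum (fun m : ℕ => (n ! : ℂ) * (stirling2 (n + m) n : ℂ) / l ^ (n + m + 1))
      ((n ! : ℂ) / ∏ j ∈ Finset.range (n + 1), (l - j)) := by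
  have hl_pos : 0 < ‖l‖ := (Nat.cast_nonneg n).trans_lt hl
  have hl_ne : l ≠ 0 := norm_pos_iff.mp hl_pos
  have hx : n * ‖l⁻¹‖ < 1 := by rwa [norm_inv, mul_inv_lt_iff₀ hl_pos, one_mul]
  have h := (hasSum_stirling2_mul_pow n l⁻¹ hx).mul_left ((n ! : ℂ) * l⁻¹ ^ (n + 1))
  rw [prod_range_succ_sub_natCast n hl_ne, div_eq_mul_inv, mul_inv, ← inv_pow, ← mul_assoc]
  refine h.congr_fun fun m => ?_
  rw [inv_pow, inv_pow]
  field_simp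
  ring
end

section
/- Let n be a positive integer and let f be a polynomial with complex coefficients of degree at most n. Then ∑_{k=1}^{n} C(n,k) (-1)^{k-1} f(k)/k = f'(0) + f(0) H_n. -/
/-!
Write `f = f(0) + X * g` with `g = f.divX`, so that `deg g < n` and `g(0) = f'(0)`. The `g`-part of
the sum is `g(0)`: together with the `k = 0` term `-g(0)` it is, up to sign, the `n`-th forward
difference of `g` at `0`, which vanishes since `deg g < n`. The `f(0)`-part is the classical
identity `∑_{k=1}^n C(n,k) (-1)^(k-1) / k = H_n`, proved by induction on `n` from Pascal's rule and
the absorption identity `k C(n+1,k) = (n+1) C(n,k-1)`.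
-/

open Finset Nat Polynomial

namespace Polynomial

variable {R : Type*} [CommRing R]

theorem sum_range_neg_one_pow_mul_choose_mul_eval_eq_zero {P : R[X]} {n : ℕ}
    (hP : P.natDegree < n) :
    ∑ k ∈ range (n + 1), (-1) ^ k * (n.choose k : R) * P.eval (k : R) = 0 := by
  have hΔ := congrFun (fwdDiff_iter_eq_zero_of_degree_lt hP) 0
  rw [fwdDiff_iter_eq_sum_shift] at hΔ
  calc ∑ k ∈ range (n + 1), (-1) ^ k * (n.choose k : R) * P.eval (k : R)
      = (-1) ^ n * ∑ k ∈ range (n + 1),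
          ((-1 : ℤ) ^ (n - k) * n.choose k) • P.eval (0 + k • (1 : R)) := by
        rw [mul_sum]
        refine sum_congr rfl fun k hk => ?_
        obtain ⟨m, rfl⟩ := Nat.exists_eq_add_of_le (mem_range_succ_iff.mp hk)
        simp only [Nat.add_sub_cancel_left, zsmul_eq_mul, nsmul_eq_mul, mul_one, zero_add]
        have hsign : (-1 : R) ^ k = (-1) ^ (k + m) * (-1) ^ m := by
          rw [pow_add, mul_assoc, ← mul_pow, neg_one_mul, neg_neg, one_pow, mul_one]
        push_cast
        rw [hsign]
        ring
    _ = 0 := by rw [hΔ, Pi.zero_apply, mul_zero]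

theorem sum_Icc_choose_mul_neg_one_pow_mul_eval_eq_eval_zero {P : R[X]} {n : ℕ}
    (hP : P.degree < n) :
    ∑ k ∈ Icc 1 n, (n.choose k : R) * (-1) ^ (k - 1) * P.eval (k : R) = P.eval 0 := by
  rcases eq_or_ne P 0 with rfl | hP0
  · simp
  have hsum := sum_range_neg_one_pow_mul_choose_mul_eval_eq_zero
    ((natDegree_lt_iff_degree_lt hP0).mpr hP)
  rw [sum_range_eq_add_Ico _ (by omega : 0 < n + 1), Ico_add_one_right_eq_Icc] at hsum
  simp only [pow_zero, choose_zero_right, Nat.cast_one, Nat.cast_zero, one_mul] at hsum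
  rw [← neg_neg (P.eval 0), ← eq_neg_of_add_eq_zero_right hsum, ← sum_neg_distrib]
  refine sum_congr rfl fun k hk => ?_
  obtain ⟨m, rfl⟩ := Nat.exists_eq_add_of_le (mem_Icc.mp hk).1
  simp only [Nat.add_sub_cancel_left, pow_add]
  ring

section Semiring

variable {S : Type*} [Semiring S]

theorem eval_eq_eval_divX_mul_add (P : S[X]) (x : S) :
    P.eval x = P.divX.eval x * x + P.eval 0 := by
  conv_lhs => rw [← divX_mul_X_add P]
  simp [coeff_zero_eq_eval_zero]

theorem eval_derivative_zero_eq_eval_divX_zero (P : S[X]) :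
    P.derivative.eval 0 = P.divX.eval 0 := by
  simp [← coeff_zero_eq_eval_zero, coeff_derivative, coeff_divX]

end Semiring

end Polynomial

variable {K : Type*} [Field K] [CharZero K]

theorem add_one_choose_div_eq (n : ℕ) {k : ℕ} (hk : k ≠ 0) :
    ((n + 1).choose k : K) / k = (n.choose k : K) / k + ((n + 1).choose k : K) / (n + 1) := by
  obtain ⟨j, rfl⟩ := Nat.exists_eq_add_one_of_ne_zero hk
  have hpascal : ((n + 1).choose (j + 1) : K) = n.choose j + n.choose (j + 1) := by
    exact_mod_cast Nat.choose_succ_succ n j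
  have habsorb : ((n + 1 : ℕ) * n.choose j : K) = (n + 1).choose (j + 1) * (j + 1 : ℕ) := by
    exact_mod_cast Nat.add_one_mul_choose_eq n j
  push_cast at habsorb ⊢
  field_simp
  linear_combination (n + 1 : K) * hpascal + habsorb

theorem sum_Icc_choose_mul_neg_one_pow_div_eq_sum_range (n : ℕ) :
    ∑ k ∈ Icc 1 n, (n.choose k : K) * (-1) ^ (k - 1) / k =
      ∑ i ∈ range n, 1 / ((i : K) + 1) := by
  induction n with
  | zero => simp
  | succ n ih =>
    have hsigns : ∑ k ∈ Icc 1 (n + 1), ((n + 1).choose k : K) * (-1) ^ (k - 1) = 1 := by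
      simpa using sum_Icc_choose_mul_neg_one_pow_mul_eval_eq_eval_zero (P := (1 : K[X]))
        (n := n + 1) (by rw [degree_one]; exact_mod_cast n.succ_pos)
    calc ∑ k ∈ Icc 1 (n + 1), ((n + 1).choose k : K) * (-1) ^ (k - 1) / k
        = ∑ k ∈ Icc 1 (n + 1), (n.choose k : K) * (-1) ^ (k - 1) / k
          + 1 / (n + 1) * ∑ k ∈ Icc 1 (n + 1), ((n + 1).choose k : K) * (-1) ^ (k - 1) := by
          rw [mul_sum, ← sum_add_distrib]
          refine sum_congr rfl fun k hk => ?_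
          rw [mul_div_right_comm, add_one_choose_div_eq n (by grind)]
          ring
      _ = ∑ i ∈ range (n + 1), 1 / ((i : K) + 1) := by
          rw [hsigns, sum_Icc_succ_top (by omega), ih, sum_range_succ]
          simp

theorem melzak_harmonic_general (n : ℕ) (f : Polynomial ℂ) (hf : f.natDegree ≤ n) :
    ∑ k ∈ Finset.Icc 1 n, (n.choose k : ℂ) * (-1) ^ (k - 1) * f.eval (k : ℂ) / (k : ℂ) =
      f.derivative.eval 0 + f.eval 0 * ∑ i ∈ Finset.range n, (1 : ℂ) / (i + 1) := by
  have hdivX : f.divX.degree < n := by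
    rcases eq_or_ne f 0 with rfl | hf0
    · simp
    · exact (degree_divX_lt hf0).trans_le (degree_le_of_natDegree_le hf)
  have hsplit : ∀ k ∈ Icc 1 n, (n.choose k : ℂ) * (-1) ^ (k - 1) * f.eval (k : ℂ) / k =
      (n.choose k : ℂ) * (-1) ^ (k - 1) * f.divX.eval (k : ℂ) +
        f.eval 0 * ((n.choose k : ℂ) * (-1) ^ (k - 1) / k) := by
    intro k hk
    have hk0 : (k : ℂ) ≠ 0 := Nat.cast_ne_zero.mpr (by grind)
    rw [f.eval_eq_eval_divX_mul_add]
    field_simp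
  rw [sum_congr rfl hsplit, sum_add_distrib, ← mul_sum,
    sum_Icc_choose_mul_neg_one_pow_mul_eval_eq_eval_zero hdivX,
    sum_Icc_choose_mul_neg_one_pow_div_eq_sum_range, eval_derivative_zero_eq_eval_divX_zero]

theorem melzak_harmonic (n : ℕ) (hn : 0 < n) (f : Polynomial ℂ) (hf : f.natDegree ≤ n) :
    ∑ k ∈ Finset.Icc 1 n, (n.choose k : ℂ) * (-1) ^ (k - 1) * f.eval (k : ℂ) / (k : ℂ) =
      f.derivative.eval 0 + f.eval 0 * ∑ i ∈ Finset.range n, (1 : ℂ) / (i + 1) :=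
  melzak_harmonic_general n f hf
end

section
/- Let n ≥ 0 be an integer and let f be a polynomial with complex coefficients of degree at most n+1. Then for all complex numbers x, y, z with y ≠ z, y ∉ {0, -1, ..., -n}, and z ∉ {0, -1, ..., -n}, one has ∑_{k=0}^{n} C(n,k) (-1)^k f(x-k)/((y+k)(z+k)) = (n!/(z-y)) · ( f(x+y)/(y(y+1)⋯(y+n)) − f(x+z)/(z(z+1)⋯(z+n)) ). -/
/-!
The divided difference of order `n + 2` of a polynomial of degree at most `n + 1` vanishes: by
Lagrange interpolation it is the coefficient of `X ^ (n + 2)`. Take `t ↦ f (x + t)` and the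
`n + 3` distinct nodes `y, z, 0, -1, …, -n`. At `-k` the node product is
`(y + k) (z + k) (-1) ^ k k! (n - k)!`, which turns the `n + 1` integer nodes into the binomial
sum, while `y` and `z` contribute the two terms on the right.
-/

open Finset Nat Polynomial

theorem sum_eval_div_prod_of_two_extra_nodes {F : Type*} [Field F] [DecidableEq F]
    (S : Finset F) (y z : F) (hyS : y ∉ S) (hzS : z ∉ S) (hyz : y ≠ z)
    (P : F[X]) (hP : P.natDegree ≤ #S) :
    ∑ t ∈ S, P.eval t / ((t - y) * (t - z) * ∏ u ∈ S.erase t, (t - u)) =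
      (P.eval y / ∏ t ∈ S, (y - t) - P.eval z / ∏ t ∈ S, (z - t)) / (z - y) := by
  have hzS' : z ∉ insert y S := by simp [hzS, Ne.symm hyz]
  have hcard : #(insert z (insert y S)) = #S + 2 := by
    rw [card_insert_of_notMem hzS', card_insert_of_notMem hyS]
  have hdeg : P.degree < #(insert z (insert y S)) := by
    rw [hcard]
    exact degree_le_natDegree.trans_lt (by exact_mod_cast Nat.lt_succ_of_lt (Nat.lt_succ_of_le hP))
  have hnodes : ∀ t ∈ S, ∏ u ∈ (insert z (insert y S)).erase t, (t - u) =
      (t - y) * (t - z) * ∏ u ∈ S.erase t, (t - u) := by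
    intro t ht
    rw [erase_insert_of_ne (ne_of_mem_of_not_mem ht hzS).symm,
      erase_insert_of_ne (ne_of_mem_of_not_mem ht hyS).symm,
      prod_insert (by simp [hzS, Ne.symm hyz]), prod_insert (by simp [hyS])]
    ring
  have h := Lagrange.coeff_eq_sum (v := id) (Set.injOn_id _) hdeg
  simp only [id] at h
  rw [hcard, coeff_eq_zero_of_natDegree_lt (by omega), sum_insert hzS', sum_insert hyS,
    erase_insert hzS', erase_insert_of_ne hyz.symm, erase_insert hyS, prod_insert hyS,
    prod_insert hzS, sum_congr rfl fun t ht => by rw [hnodes t ht]] at h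
  have hzy : z - y ≠ 0 := sub_ne_zero.2 hyz.symm
  have hPy : ∏ t ∈ S, (y - t) ≠ 0 :=
    prod_ne_zero_iff.2 fun t ht => sub_ne_zero.2 (ne_of_mem_of_not_mem ht hyS).symm
  have hPz : ∏ t ∈ S, (z - t) ≠ 0 :=
    prod_ne_zero_iff.2 fun t ht => sub_ne_zero.2 (ne_of_mem_of_not_mem ht hzS).symm
  generalize ∑ t ∈ S, P.eval t / ((t - y) * (t - z) * ∏ u ∈ S.erase t, (t - u)) = s at h ⊢
  rw [show y - z = -(z - y) by ring] at h
  rw [eq_div_iff hzy]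
  field_simp at h ⊢
  linear_combination -h

theorem prod_range_sub_eq_neg_one_pow_mul_factorial (R : Type*) [CommRing R] (k : ℕ) :
    ∏ j ∈ range k, ((j : R) - k) = (-1) ^ k * k ! := by
  calc ∏ j ∈ range k, ((j : R) - k) = ∏ j ∈ range k, (-1 * ((k - j : ℕ) : R)) :=
        prod_congr rfl fun j hj => by rw [Nat.cast_sub (mem_range.1 hj).le]; ring
    _ = (-1) ^ k * k ! := by
      rw [prod_mul_distrib, prod_const, card_range, ← Nat.cast_prod,
        ← descFactorial_eq_prod_range, descFactorial_self]

theorem prod_range_erase_sub (R : Type*) [CommRing R] {k n : ℕ} (hk : k ≤ n) :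
    ∏ j ∈ (range (n + 1)).erase k, ((j : R) - k) = (-1) ^ k * k ! * (n - k)! := by
  induction n, hk using Nat.le_induction with
  | base =>
    rw [range_add_one, erase_insert notMem_range_self,
      prod_range_sub_eq_neg_one_pow_mul_factorial]
    simp
  | succ n hkn ih =>
    rw [range_add_one, erase_insert_of_ne (by omega), prod_insert (by simp), ih,
      Nat.succ_sub hkn, factorial_succ]
    push_cast [Nat.cast_sub hkn]
    ring

theorem sum_range_choose_mul_eval_neg_div {F : Type*} [Field F] [CharZero F] (n : ℕ) (P : F[X])
    (hP : P.natDegree ≤ n + 1) (y z : F) (hyz : y ≠ z)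
    (hy : ∀ k ∈ range (n + 1), y + k ≠ 0) (hz : ∀ k ∈ range (n + 1), z + k ≠ 0) :
    ∑ k ∈ range (n + 1),
        (n.choose k : F) * (-1) ^ k * P.eval (-(k : F)) / ((y + k) * (z + k)) =
      (n ! : F) / (z - y) *
        (P.eval y / ∏ j ∈ range (n + 1), (y + j) -
          P.eval z / ∏ j ∈ range (n + 1), (z + j)) := by
  classical
  set node : ℕ → F := fun k => -(k : F)
  have hnode : Function.Injective node := neg_injective.comp Nat.cast_injective
  have hnotMem {w : F} (hw : ∀ k ∈ range (n + 1), w + k ≠ 0) :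
      w ∉ (range (n + 1)).image node := by
    simp only [mem_image, not_exists, not_and]
    intro k hk hkw
    exact hw k hk (by simp [node, ← hkw])
  have hprod {w : F} :
      ∏ t ∈ (range (n + 1)).image node, (w - t) = ∏ j ∈ range (n + 1), (w + j) := by
    rw [prod_image hnode.injOn]
    simp [node]
  have key := sum_eval_div_prod_of_two_extra_nodes _ y z (hnotMem hy) (hnotMem hz) hyz P
    (by rwa [card_image_of_injective _ hnode, card_range])
  rw [sum_image hnode.injOn, hprod, hprod] at key
  rw [mul_comm_div, ← key, mul_sum]
  refine sum_congr rfl fun k hk => ?_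
  have hkn := mem_range_succ_iff.1 hk
  have hyk := hy k hk
  have hzk := hz k hk
  have hk! : (k ! : F) ≠ 0 := Nat.cast_ne_zero.2 k.factorial_ne_zero
  have hnk! : ((n - k)! : F) ≠ 0 := Nat.cast_ne_zero.2 (n - k).factorial_ne_zero
  rw [← image_erase hnode, prod_image hnode.injOn]
  simp only [node, neg_sub_neg]
  rw [show (-(k : F) - y) * (-k - z) = (y + k) * (z + k) by ring, prod_range_erase_sub F hkn,
    ← choose_mul_factorial_mul_factorial hkn]
  push_cast
  field_simp
  rw [← pow_mul, pow_mul', neg_one_sq, one_pow, mul_one]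

theorem melzak_two_denominators (n : ℕ) (f : Polynomial ℂ) (hf : f.natDegree ≤ n + 1)
    (x y z : ℂ) (hyz : y ≠ z)
    (hy : ∀ k ∈ Finset.range (n + 1), y + k ≠ 0)
    (hz : ∀ k ∈ Finset.range (n + 1), z + k ≠ 0) :
    ∑ k ∈ Finset.range (n + 1),
        (n.choose k : ℂ) * (-1) ^ k * f.eval (x - k) / ((y + k) * (z + k)) =
      (n ! : ℂ) / (z - y) *
        (f.eval (x + y) / (∏ j ∈ Finset.range (n + 1), (y + j)) -
          f.eval (x + z) / ∏ j ∈ Finset.range (n + 1), (z + j)) := by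
  have hshift : (f.comp (X + C x)).natDegree ≤ n + 1 := by
    rwa [natDegree_comp, natDegree_X_add_C, mul_one]
  have h := sum_range_choose_mul_eval_neg_div n _ hshift y z hyz hy hz
  simpa only [eval_comp, eval_add, eval_X, eval_C, add_comm _ x, sub_eq_add_neg] using h
end

section
/- Let f(t) = a_0 + a_1 t + ⋯ + a_M t^M be a polynomial with complex coefficients. Then for every positive integer n and every complex number λ with λ ∉ {0, 1, 2, ..., n}, one has ∑_{k=0}^{n} C(n,k) (-1)^k f(k)/(k-λ)^2 = f'(λ) · ∑_{k=0}^{n} C(n,k) (-1)^k/(k-λ) + f(λ) · ∑_{k=0}^{n} C(n,k) (-1)^k/(k-λ)^2 + (-1)^n n! ∑_{m=n+1}^{M} a_m ( ∑_{j=1}^{m-1} j λ^{j-1} S(m-j-1, n) ), where the last sum is empty (equal to zero) when M ≤ n. -/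
open Finset Nat

lemma stirling2_eq_zero : ∀ p n : ℕ, p < n → stirling2 p n = 0 := by
  intro p
  induction p with
  | zero => intro n h; cases n with
    | zero => omega
    | succ m => rfl
  | succ q ih =>
    intro n h
    cases n with
    | zero => omega
    | succ m =>
      show (m + 1) * stirling2 q (m + 1) + stirling2 q m = 0
      rw [ih (m+1) (by omega), ih m (by omega)]; ring

lemma alt_sum_pow (d : ℕ) : ∀ n : ℕ,
    ∑ k ∈ Finset.range (n + 1), (n.choose k : ℂ) * (-1) ^ k * (k : ℂ) ^ d =
      (-1) ^ n * (n ! : ℂ) * (stirling2 d n : ℂ) := by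
  induction d with
  | zero =>
    intro n
    cases n with
    | zero => simp [stirling2]
    | succ m =>
      have h := Int.alternating_sum_range_choose (n := m + 1)
      simp only [Nat.succ_ne_zero, if_false] at h
      have h2 : ∑ k ∈ Finset.range (m + 1 + 1), ((m+1).choose k : ℂ) * (-1) ^ k * (k : ℂ) ^ 0 =
          ((∑ i ∈ Finset.range (m + 1 + 1), (-1) ^ i * ((m+1).choose i : ℤ) : ℤ) : ℂ) := by
        push_cast
        exact Finset.sum_congr rfl fun k _ => by ring
      rw [h2, h]
      rw [stirling2_eq_zero 0 (m+1) (by omega)]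
      simp
  | succ d ih =>
    intro n
    cases n with
    | zero => simp [stirling2]
    | succ m =>
      have key : ∀ k : ℕ, ((m+1).choose k : ℂ) * (k : ℂ) =
          ((m+1) : ℂ) * (((m+1).choose k : ℂ) - (m.choose k : ℂ)) := by
        intro k
        cases k with
        | zero => simp
        | succ j =>
          rcases le_or_gt (j + 1) (m + 1) with hle | hgt
          · have hc1 : ((m:ℂ) + 1) * (m.choose j : ℂ) = ((m+1).choose (j+1) : ℂ) * ((j:ℂ)+1) := by
              exact_mod_cast congrArg (fun x : ℕ => (x : ℂ)) (Nat.add_one_mul_choose_eq m j)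
            have hc2 : ((m+1).choose (j+1) : ℂ) = (m.choose j : ℂ) + (m.choose (j+1) : ℂ) := by
              exact_mod_cast congrArg (fun x : ℕ => (x : ℂ)) (Nat.choose_succ_succ m j)
            push_cast
            linear_combination -hc1 - ((m:ℂ)+1) * hc2
          · rw [Nat.choose_eq_zero_of_lt hgt, Nat.choose_eq_zero_of_lt (by omega)]
            simp
      calc ∑ k ∈ Finset.range (m + 1 + 1), ((m+1).choose k : ℂ) * (-1) ^ k * (k : ℂ) ^ (d+1)
          = ((m:ℂ)+1) * ((∑ k ∈ Finset.range (m + 1 + 1), ((m+1).choose k : ℂ) * (-1) ^ k * (k:ℂ) ^ d)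
            - ∑ k ∈ Finset.range (m + 1 + 1), (m.choose k : ℂ) * (-1) ^ k * (k:ℂ) ^ d) := by
            rw [mul_sub, Finset.mul_sum, Finset.mul_sum, ← Finset.sum_sub_distrib]
            refine Finset.sum_congr rfl fun k _ => ?_
            linear_combination ((-1:ℂ))^k * (k:ℂ)^d * key k
        _ = ((m:ℂ)+1) * ((-1)^(m+1) * ((m+1)! : ℂ) * (stirling2 d (m+1) : ℂ)
              - (-1)^m * (m ! : ℂ) * (stirling2 d m : ℂ)) := by
            have htrunc : ∑ k ∈ Finset.range (m+1+1), (m.choose k : ℂ) * (-1)^k * (k:ℂ)^d =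
                ∑ k ∈ Finset.range (m+1), (m.choose k : ℂ) * (-1)^k * (k:ℂ)^d := by
              rw [Finset.sum_range_succ, Nat.choose_succ_self]
              simp
            rw [ih (m+1), htrunc, ih m]
        _ = (-1) ^ (m+1) * ((m+1)! : ℂ) * (stirling2 (d+1) (m+1) : ℂ) := by
            have hs : stirling2 (d+1) (m+1) = (m+1) * stirling2 d (m+1) + stirling2 d m := rfl
            rw [hs, Nat.factorial_succ]
            push_cast
            ring

lemma pow_decomp (x y : ℂ) : ∀ m : ℕ,
    x ^ m = y ^ m + (m : ℂ) * y ^ (m - 1) * (x - y) +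
      (x - y) ^ 2 * ∑ r ∈ Finset.range (m - 1), ((m - 1 - r : ℕ) : ℂ) * y ^ (m - 2 - r) * x ^ r := by
  intro m
  induction m with
  | zero => simp
  | succ t ih =>
    have hq : ∑ r ∈ Finset.range (t + 1 - 1), ((t + 1 - 1 - r : ℕ) : ℂ) * y ^ (t + 1 - 2 - r) * x ^ r
        = x * (∑ r ∈ Finset.range (t - 1), ((t - 1 - r : ℕ) : ℂ) * y ^ (t - 2 - r) * x ^ r)
          + (t : ℂ) * y ^ (t - 1) := by
      cases t with
      | zero => simp
      | succ s =>
        rw [show s + 1 + 1 - 1 = s + 1 from rfl, Finset.sum_range_succ']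
        simp only [show s + 1 - 1 = s from rfl]
        rw [Finset.mul_sum]
        congr 1
        · refine Finset.sum_congr rfl fun r hr => ?_
          rw [show s + 1 - (r + 1) = s - r by omega,
            show s + 1 + 1 - 2 - (r + 1) = s - 1 - r by omega,
            show s + 1 - 2 - r = s - 1 - r by omega]
          ring
        · rw [show s + 1 - 0 = s + 1 by omega, show s + 1 + 1 - 2 - 0 = s by omega]
          push_cast
          ring
    rw [hq]
    cases t with
    | zero => simp
    | succ s =>
      have hys : (y : ℂ) ^ (s + 1) = y ^ s * y := by ring
      have hx : x ^ (s + 1 + 1) = x * x ^ (s + 1) := by ring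
      rw [hx, ih]
      have e1 : s + 1 - 1 = s := rfl
      have e2 : s + 1 + 1 - 1 = s + 1 := rfl
      rw [e1, e2, pow_succ y s]
      push_cast
      ring

lemma poly_decomp (M : ℕ) (f : Polynomial ℂ) (hf : f.natDegree ≤ M) (l x : ℂ) :
    f.eval x = f.eval l + f.derivative.eval l * (x - l) +
      (x - l) ^ 2 * ∑ m ∈ Finset.range (M + 1), f.coeff m *
        ∑ r ∈ Finset.range (m - 1), ((m - 1 - r : ℕ) : ℂ) * l ^ (m - 2 - r) * x ^ r := by
  have hev : ∀ z : ℂ, f.eval z = ∑ m ∈ Finset.range (M + 1), f.coeff m * z ^ m := fun z =>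
    Polynomial.eval_eq_sum_range' (Nat.lt_succ_of_le hf) z
  have hder : f.derivative.eval l =
      ∑ m ∈ Finset.range (M + 1), f.coeff m * ((m : ℂ) * l ^ (m - 1)) := by
    have hd : f.derivative.natDegree < M + 1 :=
      Nat.lt_succ_of_le (le_trans (Polynomial.natDegree_derivative_le f) (by omega))
    rw [Polynomial.eval_eq_sum_range' hd l]
    rw [Finset.sum_range_succ' (fun m => f.coeff m * ((m : ℂ) * l ^ (m - 1))) M]
    simp only [Polynomial.coeff_derivative, Nat.cast_zero, zero_mul, mul_zero, add_zero,
      Nat.cast_add, Nat.cast_one, Nat.add_sub_cancel]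
    rw [Finset.sum_range_succ]
    rw [Polynomial.coeff_eq_zero_of_natDegree_lt (by omega : f.natDegree < M + 1)]
    simp only [zero_mul, add_zero]
    exact Finset.sum_congr rfl fun i _ => by ring
  rw [hev x, hev l, hder, Finset.sum_mul, Finset.mul_sum, ← Finset.sum_add_distrib,
    ← Finset.sum_add_distrib]
  refine Finset.sum_congr rfl fun m _ => ?_
  linear_combination f.coeff m * pow_decomp x l m

theorem melzak_squared_denominator (n : ℕ) (hn : 0 < n) (M : ℕ) (f : Polynomial ℂ)
    (hf : f.natDegree ≤ M) (l : ℂ) (hl : ∀ k ∈ Finset.range (n + 1), l ≠ k) :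
    ∑ k ∈ Finset.range (n + 1), (n.choose k : ℂ) * (-1) ^ k * f.eval (k : ℂ) / ((k : ℂ) - l) ^ 2 =
      f.derivative.eval l *
          ∑ k ∈ Finset.range (n + 1), (n.choose k : ℂ) * (-1) ^ k / ((k : ℂ) - l) +
        f.eval l *
          ∑ k ∈ Finset.range (n + 1), (n.choose k : ℂ) * (-1) ^ k / ((k : ℂ) - l) ^ 2 +
        (-1) ^ n * (n ! : ℂ) *
          ∑ m ∈ Finset.Icc (n + 1) M,
            f.coeff m *
              ∑ j ∈ Finset.Icc 1 (m - 1), (j : ℂ) * l ^ (j - 1) * (stirling2 (m - j - 1) n : ℂ) := by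
  set Q : ℂ → ℂ := fun x => ∑ m ∈ Finset.range (M + 1), f.coeff m *
      ∑ r ∈ Finset.range (m - 1), ((m - 1 - r : ℕ) : ℂ) * l ^ (m - 2 - r) * x ^ r with hQ
  have hne : ∀ k ∈ Finset.range (n + 1), ((k : ℂ) - l) ≠ 0 := fun k hk =>
    sub_ne_zero.mpr (hl k hk).symm
  -- Step 1: rewrite LHS as three sums
  have step1 : ∑ k ∈ Finset.range (n + 1),
        (n.choose k : ℂ) * (-1) ^ k * f.eval (k : ℂ) / ((k : ℂ) - l) ^ 2 =
      f.derivative.eval l *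
          ∑ k ∈ Finset.range (n + 1), (n.choose k : ℂ) * (-1) ^ k / ((k : ℂ) - l) +
        f.eval l *
          ∑ k ∈ Finset.range (n + 1), (n.choose k : ℂ) * (-1) ^ k / ((k : ℂ) - l) ^ 2 +
        ∑ k ∈ Finset.range (n + 1), (n.choose k : ℂ) * (-1) ^ k * Q (k : ℂ) := by
    rw [Finset.mul_sum, Finset.mul_sum, ← Finset.sum_add_distrib, ← Finset.sum_add_distrib]
    refine Finset.sum_congr rfl fun k hk => ?_
    have h0 := hne k hk
    rw [poly_decomp M f hf l (k : ℂ)]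
    simp only [hQ]
    field_simp
    ring
  rw [step1]
  congr 1
  -- Step 2: evaluate the tail sum
  have step2 : ∑ k ∈ Finset.range (n + 1), (n.choose k : ℂ) * (-1) ^ k * Q (k : ℂ) =
      (-1) ^ n * (n ! : ℂ) * ∑ m ∈ Finset.range (M + 1), f.coeff m *
        ∑ r ∈ Finset.range (m - 1),
          ((m - 1 - r : ℕ) : ℂ) * l ^ (m - 2 - r) * (stirling2 r n : ℂ) := by
    rw [hQ]
    simp only [Finset.mul_sum]
    rw [Finset.sum_comm]
    refine Finset.sum_congr rfl fun m _ => ?_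
    rw [Finset.sum_comm]
    refine Finset.sum_congr rfl fun r _ => ?_
    have h := alt_sum_pow r n
    calc ∑ k ∈ Finset.range (n + 1),
          (n.choose k : ℂ) * (-1) ^ k * (f.coeff m * (((m - 1 - r : ℕ) : ℂ) * l ^ (m - 2 - r) * (k:ℂ) ^ r))
        = f.coeff m * (((m - 1 - r : ℕ) : ℂ) * l ^ (m - 2 - r)) *
            ∑ k ∈ Finset.range (n + 1), (n.choose k : ℂ) * (-1) ^ k * (k : ℂ) ^ r := by
          rw [Finset.mul_sum]; exact Finset.sum_congr rfl fun k _ => by ring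
      _ = (-1) ^ n * (n ! : ℂ) * (f.coeff m * (((m - 1 - r : ℕ) : ℂ) * l ^ (m - 2 - r) * (stirling2 r n : ℂ))) := by
          rw [h]; ring
  rw [step2]
  -- Step 3: restrict the sum and reindex
  congr 1
  have hrestrict : ∑ m ∈ Finset.range (M + 1), f.coeff m *
        ∑ r ∈ Finset.range (m - 1), ((m - 1 - r : ℕ) : ℂ) * l ^ (m - 2 - r) * (stirling2 r n : ℂ) =
      ∑ m ∈ Finset.Icc (n + 1) M, f.coeff m *
        ∑ r ∈ Finset.range (m - 1), ((m - 1 - r : ℕ) : ℂ) * l ^ (m - 2 - r) * (stirling2 r n : ℂ) := by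
    refine (Finset.sum_subset ?_ ?_).symm
    · intro m hm
      simp only [Finset.mem_Icc] at hm
      simp only [Finset.mem_range]
      omega
    · intro m hm hnot
      simp only [Finset.mem_range] at hm
      simp only [Finset.mem_Icc] at hnot
      have hmn : m ≤ n := by omega
      have : ∑ r ∈ Finset.range (m - 1),
          ((m - 1 - r : ℕ) : ℂ) * l ^ (m - 2 - r) * (stirling2 r n : ℂ) = 0 := by
        refine Finset.sum_eq_zero fun r hr => ?_
        simp only [Finset.mem_range] at hr
        rw [stirling2_eq_zero r n (by omega)]
        simp
      rw [this, mul_zero]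
  rw [hrestrict]
  refine Finset.sum_congr rfl fun m hm => ?_
  simp only [Finset.mem_Icc] at hm
  congr 1
  -- reindex j = m - 1 - r
  rw [show Finset.Icc 1 (m - 1) = Finset.Ico 1 m from by
    rw [← Finset.Ico_add_one_right_eq_Icc]; congr 1; omega]
  rw [Finset.sum_Ico_eq_sum_range]
  rw [← Finset.sum_range_reflect]
  refine Finset.sum_congr rfl fun i hi => ?_
  simp only [Finset.mem_range] at hi
  rw [show m - 1 - 1 - i = m - 2 - i from by omega,
    show m - 1 - (m - 2 - i) = i + 1 from by omega,
    show m - 2 - (m - 2 - i) = i from by omega,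
    show 1 + i - 1 = i from by omega,
    show m - (1 + i) - 1 = m - 2 - i from by omega]
  push_cast
  ring
end

section
/- For every positive integer m, every nonnegative integer n, and every complex number λ with λ ∉ {0, 1, 2, ..., n}, one has ∑_{k=0}^{n} C(n,k) (-1)^k k^m/(k-λ) = (-1)^n n! ∑_{p=0}^{m-1} λ^p S(m-p-1, n) + λ^m ∑_{k=0}^{n} C(n,k) (-1)^k/(k-λ). -/
open Finset Nat

lemma stirU : ∀ p n : ℕ, stirling2 (p+1) (n+1) = ∑ i ∈ range (p+1), p.choose i * stirling2 i n := by
  intro p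
  induction p with
  | zero =>
    intro n
    cases n <;> simp [stirling2]
  | succ p ih =>
    intro n
    have h1 : stirling2 (p+2) (n+1) = (n+1) * stirling2 (p+1) (n+1) + stirling2 (p+1) n := rfl
    rw [h1, ih n]
    have h2 : ∑ i ∈ range (p+2), (p+1).choose i * stirling2 i n
        = ∑ i ∈ range (p+1), p.choose i * stirling2 (i+1) n
          + ∑ i ∈ range (p+1), p.choose i * stirling2 i n := by
      rw [Finset.sum_range_succ' (fun i => (p+1).choose i * stirling2 i n) (p+1)]
      simp only [Nat.choose_succ_succ, add_mul, Finset.sum_add_distrib, Nat.succ_eq_add_one]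
      have h3 : ∑ i ∈ range (p+1), p.choose (i+1) * stirling2 (i+1) n
            + (p+1).choose 0 * stirling2 0 n
          = ∑ i ∈ range (p+1), p.choose i * stirling2 i n := by
        have := Finset.sum_range_succ' (fun i => p.choose i * stirling2 i n) (p+1)
        rw [Finset.sum_range_succ (fun i => p.choose i * stirling2 i n) (p+1)] at this
        simp only [Nat.choose_succ_self, zero_mul, add_zero, Nat.succ_eq_add_one] at this
        simpa using this.symm
      omega
    rw [h2]
    cases n with
    | zero =>
      have hz : ∀ i, stirling2 (i+1) 0 = 0 := fun i => rfl
      simp only [hz, mul_zero, Finset.sum_const_zero, zero_add]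
      omega
    | succ n' =>
      have hs : ∀ i, stirling2 (i+1) (n'+1) = (n'+1) * stirling2 i (n'+1) + stirling2 i n' := fun i => rfl
      simp only [hs, mul_add, Finset.sum_add_distrib]
      have hpull : ∑ x ∈ range (p+1), p.choose x * ((n'+1) * stirling2 x (n'+1))
          = (n'+1) * ∑ x ∈ range (p+1), p.choose x * stirling2 x (n'+1) := by
        rw [Finset.mul_sum]; exact Finset.sum_congr rfl fun x _ => by ring
      rw [hpull, ← ih n', hs p]
      ring

lemma stirT (p n : ℕ) : (n+1) * stirling2 p (n+1) = ∑ i ∈ range p, p.choose i * stirling2 i n := by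
  cases p with
  | zero => simp [stirling2]
  | succ p =>
    have h1 : stirling2 (p+2) (n+1) = (n+1) * stirling2 (p+1) (n+1) + stirling2 (p+1) n := rfl
    have h2 := stirU (p+1) n
    rw [h1] at h2
    rw [Finset.sum_range_succ (fun i => (p+1).choose i * stirling2 i n) (p+1)] at h2
    simp only [Nat.choose_self, one_mul] at h2
    omega

lemma Alem : ∀ n p : ℕ, ∑ k ∈ range (n+1), (n.choose k : ℂ) * (-1)^k * (k:ℂ)^p
    = (-1)^n * (n ! : ℂ) * (stirling2 p n : ℂ) := by
  intro n
  induction n with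
  | zero =>
    intro p
    cases p with
    | zero => simp [stirling2]
    | succ p => simp [stirling2]
  | succ n ih =>
    intro p
    rw [Finset.sum_range_succ' (fun k => ((n+1).choose k : ℂ) * (-1)^k * (k:ℂ)^p) (n+1)]
    have e1 : ∀ k, (((n+1).choose (k+1) : ℕ) : ℂ) = (n.choose k : ℂ) + (n.choose (k+1) : ℂ) := by
      intro k; rw [Nat.choose_succ_succ]; push_cast; ring
    simp only [e1]
    have e2 : ∑ k ∈ range (n+1), ((n.choose k : ℂ) + (n.choose (k+1) : ℂ)) * (-1)^(k+1) * ((k+1 : ℕ):ℂ)^p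
        = ∑ k ∈ range (n+1), (n.choose k : ℂ) * (-1)^(k+1) * ((k:ℂ)+1)^p
          + ∑ k ∈ range (n+1), (n.choose (k+1) : ℂ) * (-1)^(k+1) * ((k+1:ℕ):ℂ)^p := by
      rw [← Finset.sum_add_distrib]
      exact Finset.sum_congr rfl fun k _ => by push_cast; ring
    rw [e2]
    -- reassemble the second sum with the k = 0 term
    have e3 : ∑ k ∈ range (n+1), (n.choose (k+1) : ℂ) * (-1)^(k+1) * ((k+1:ℕ):ℂ)^p
          + ((n+1).choose 0 : ℂ) * (-1)^0 * ((0:ℕ):ℂ)^p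
        = ∑ k ∈ range (n+1), (n.choose k : ℂ) * (-1)^k * (k:ℂ)^p := by
      have h := Finset.sum_range_succ' (fun k => (n.choose k : ℂ) * (-1)^k * (k:ℂ)^p) (n+1)
      rw [Finset.sum_range_succ (fun k => (n.choose k : ℂ) * (-1)^k * (k:ℂ)^p) (n+1)] at h
      simp only [Nat.choose_succ_self, Nat.cast_zero, zero_mul, add_zero] at h
      rw [h]
      simp
    rw [add_assoc, e3, ih p]
    -- expand (k+1)^p
    have e4 : ∑ k ∈ range (n+1), (n.choose k : ℂ) * (-1)^(k+1) * ((k:ℂ)+1)^p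
        = -∑ i ∈ range (p+1), (p.choose i : ℂ) * ((-1)^n * (n ! : ℂ) * (stirling2 i n : ℂ)) := by
      have hb : ∀ k : ℕ, ((k:ℂ)+1)^p = ∑ i ∈ range (p+1), (k:ℂ)^i * (p.choose i : ℂ) := by
        intro k
        rw [add_pow]
        exact Finset.sum_congr rfl fun i _ => by ring
      calc ∑ k ∈ range (n+1), (n.choose k : ℂ) * (-1)^(k+1) * ((k:ℂ)+1)^p
          = ∑ k ∈ range (n+1), ∑ i ∈ range (p+1),
              -((p.choose i : ℂ) * ((n.choose k : ℂ) * (-1)^k * (k:ℂ)^i)) := by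
            refine Finset.sum_congr rfl fun k _ => ?_
            rw [hb k, Finset.mul_sum]
            exact Finset.sum_congr rfl fun i _ => by ring
        _ = ∑ i ∈ range (p+1), ∑ k ∈ range (n+1),
              -((p.choose i : ℂ) * ((n.choose k : ℂ) * (-1)^k * (k:ℂ)^i)) := Finset.sum_comm
        _ = -∑ i ∈ range (p+1), (p.choose i : ℂ) * ((-1)^n * (n ! : ℂ) * (stirling2 i n : ℂ)) := by
            rw [← Finset.sum_neg_distrib]
            refine Finset.sum_congr rfl fun i _ => ?_
            rw [Finset.sum_neg_distrib, ← Finset.mul_sum, ih i]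
    rw [e4]
    rw [Finset.sum_range_succ (fun i => (p.choose i : ℂ) * ((-1)^n * (n ! : ℂ) * (stirling2 i n : ℂ))) p]
    simp only [Nat.choose_self, Nat.cast_one, one_mul]
    have e5 : ∑ i ∈ range p, (p.choose i : ℂ) * ((-1)^n * (n ! : ℂ) * (stirling2 i n : ℂ))
        = (-1)^n * (n ! : ℂ) * ((n+1) * (stirling2 p (n+1) : ℂ)) := by
      have hT := stirT p n
      have hc : ((n:ℂ)+1) * (stirling2 p (n+1) : ℂ) = ∑ i ∈ range p, (p.choose i : ℂ) * (stirling2 i n : ℂ) := by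
        exact_mod_cast hT
      have hf : ∑ i ∈ range p, (p.choose i:ℂ) * ((-1)^n * (n !:ℂ) * (stirling2 i n:ℂ))
          = (-1)^n * (n !:ℂ) * ∑ i ∈ range p, (p.choose i:ℂ) * (stirling2 i n:ℂ) := by
        rw [Finset.mul_sum]; exact Finset.sum_congr rfl fun i _ => by ring
      rw [hf, ← hc]
    rw [e5]
    push_cast [Nat.factorial_succ]
    ring

lemma main_aux (n : ℕ) (l : ℂ) (hl : ∀ k ∈ Finset.range (n + 1), l ≠ k) : ∀ m : ℕ,
    ∑ k ∈ Finset.range (n + 1), (n.choose k : ℂ) * (-1) ^ k * (k : ℂ) ^ m / ((k : ℂ) - l) =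
      (-1) ^ n * (n ! : ℂ) * ∑ p ∈ Finset.range m, l ^ p * (stirling2 (m - p - 1) n : ℂ) +
        l ^ m * ∑ k ∈ Finset.range (n + 1), (n.choose k : ℂ) * (-1) ^ k / ((k : ℂ) - l) := by
  have hne : ∀ k ∈ Finset.range (n+1), (k:ℂ) - l ≠ 0 := fun k hk =>
    sub_ne_zero.mpr (Ne.symm (hl k hk))
  intro m
  induction m with
  | zero => simp
  | succ m ih =>
    have step1 : ∑ k ∈ range (n+1), (n.choose k : ℂ) * (-1)^k * (k:ℂ)^(m+1) / ((k:ℂ) - l)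
        = ∑ k ∈ range (n+1), (n.choose k : ℂ) * (-1)^k * (k:ℂ)^m
          + l * ∑ k ∈ range (n+1), (n.choose k : ℂ) * (-1)^k * (k:ℂ)^m / ((k:ℂ) - l) := by
      rw [Finset.mul_sum, ← Finset.sum_add_distrib]
      refine Finset.sum_congr rfl fun k hk => ?_
      have h := hne k hk
      field_simp
      ring
    rw [step1, Alem n m, ih]
    have hshift : ∑ p ∈ Finset.range (m+1), l ^ p * (stirling2 (m + 1 - p - 1) n : ℂ)
        = (stirling2 m n : ℂ) + ∑ p ∈ Finset.range m, l ^ (p+1) * (stirling2 (m - p - 1) n : ℂ) := by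
      rw [Finset.sum_range_succ' (fun p => l ^ p * (stirling2 (m + 1 - p - 1) n : ℂ)) m]
      simp only [Nat.succ_sub_succ_eq_sub, pow_zero, one_mul, Nat.sub_zero, Nat.add_sub_cancel]
      ring
    have hpull : ∑ p ∈ Finset.range m, l ^ (p+1) * (stirling2 (m - p - 1) n : ℂ)
        = l * ∑ p ∈ Finset.range m, l ^ p * (stirling2 (m - p - 1) n : ℂ) := by
      rw [Finset.mul_sum]; exact Finset.sum_congr rfl fun p _ => by ring
    rw [hshift, hpull]
    ring

theorem melzak_monomial (m n : ℕ) (hm : 0 < m) (l : ℂ)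
    (hl : ∀ k ∈ Finset.range (n + 1), l ≠ k) :
    ∑ k ∈ Finset.range (n + 1), (n.choose k : ℂ) * (-1) ^ k * (k : ℂ) ^ m / ((k : ℂ) - l) =
      (-1) ^ n * (n ! : ℂ) * ∑ p ∈ Finset.range m, l ^ p * (stirling2 (m - p - 1) n : ℂ) +
        l ^ m * ∑ k ∈ Finset.range (n + 1), (n.choose k : ℂ) * (-1) ^ k / ((k : ℂ) - l) :=
  main_aux n l hl m
end
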